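/- arXiv:1310.2926 — 7 statements merged into one kernel-verified Lean document; each statement's English description precedes it below -/
import Mathlib

section
/- Let n > 2 and let A be an n×n real symmetric matrix with zero diagonal, and let Ã be its U-centered matrix. Then every row of Ã sums to zero and every column of Ã sums to zero. -/
/-- The U-centered matrix of an `n × n` real matrix `A`:
`Ã i j = a i j − (Σ_ℓ a i ℓ)/(n−2) − (Σ_k a k j)/(n−2) + (Σ_{k,ℓ} a k ℓ)/((n−1)(n−2))`
for `i ≠ j`, and `Ã i i = 0`. -/
noncomputable def Ucenter {n : ℕ} (A : Matrix (Fin n) (Fin n) ℝ) :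
    Matrix (Fin n) (Fin n) ℝ :=
  Matrix.of fun i j =>
    if i = j then 0
    else A i j - (∑ l, A i l) / ((n : ℝ) - 2) - (∑ k, A k j) / ((n : ℝ) - 2)
      + (∑ k, ∑ l, A k l) / (((n : ℝ) - 1) * ((n : ℝ) - 2))

/-- Every row and every column of a U-centered matrix sums to zero. -/
theorem Ucenter_row_col_sum_zero {n : ℕ} (hn : 2 < n)
    (A : Matrix (Fin n) (Fin n) ℝ) (hsymm : A.IsSymm)
    (hdiag : ∀ i, A i i = 0) :
    (∀ i, ∑ j, Ucenter A i j = 0) ∧ (∀ j, ∑ i, Ucenter A i j = 0) := by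
  have hnR : (2:ℝ) < (n:ℝ) := by exact_mod_cast hn
  have hn1 : ((n:ℝ) - 1) ≠ 0 := by linarith
  have hn2 : ((n:ℝ) - 2) ≠ 0 := by linarith
  have hA : ∀ i j : Fin n, A j i = A i j := fun i j => by
    have := congrFun (congrFun hsymm i) j
    simpa [Matrix.transpose_apply] using this
  have hCR : ∀ i : Fin n, (∑ k, A k i) = ∑ l, A i l :=
    fun i => Finset.sum_congr rfl fun k _ => hA i k
  have key : ∀ i, ∑ j, Ucenter A i j = 0 := by
    intro i
    have hcard : ((Finset.univ.erase i : Finset (Fin n)).card : ℝ) = (n:ℝ) - 1 := by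
      rw [Finset.card_erase_of_mem (Finset.mem_univ i), Finset.card_univ, Fintype.card_fin]
      have : 1 ≤ n := by omega
      push_cast [this]
      ring
    have h0 : ∑ j, Ucenter A i j =
        ∑ j ∈ Finset.univ.erase i,
          (A i j - (∑ l, A i l) / ((n : ℝ) - 2) - (∑ k, A k j) / ((n : ℝ) - 2)
            + (∑ k, ∑ l, A k l) / (((n : ℝ) - 1) * ((n : ℝ) - 2))) := by
      rw [← Finset.sum_erase (a := i) (f := fun j => Ucenter A i j) Finset.univ (by simp [Ucenter])]
      refine Finset.sum_congr rfl fun j hj => ?_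
      have hij : i ≠ j := fun h => (Finset.mem_erase.mp hj).1 h.symm
      simp [Ucenter, hij]
    rw [h0]
    simp only [Finset.sum_add_distrib, Finset.sum_sub_distrib, Finset.sum_const, nsmul_eq_mul]
    rw [Finset.sum_erase_eq_sub (Finset.mem_univ i),
        Finset.sum_erase_eq_sub (f := fun j => (∑ k, A k j) / ((n:ℝ) - 2)) (Finset.mem_univ i),
        hdiag i, hcard]
    rw [← Finset.sum_div, hCR i]
    have hT : (∑ j : Fin n, ∑ k, A k j) = ∑ k, ∑ l, A k l := Finset.sum_comm
    rw [hT]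
    field_simp
    ring
  refine ⟨key, fun j => ?_⟩
  have : ∀ i, Ucenter A i j = Ucenter A j i := by
    intro i
    by_cases h : i = j
    · subst h; rfl
    · simp only [Ucenter, Matrix.of_apply, if_neg h, if_neg (Ne.symm h), hA i j, hCR i, hCR j]
      ring
  rw [Finset.sum_congr rfl fun i _ => this i]
  exact key j
end

section
/- Let n > 2 and let A be an n×n real symmetric matrix with zero diagonal, and let Ã be its U-centered matrix. Then U-centering is idempotent: the U-centered matrix of Ã equals Ã. -/
lemma sum_ite_zero_eq {n : ℕ} (i : Fin n) (f : Fin n → ℝ) :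
    ∑ l, (if i = l then 0 else f l) = (∑ l, f l) - f i := by
  have h1 : ∀ l, (if i = l then (0:ℝ) else f l) = f l - (if i = l then f l else 0) := by
    intro l
    by_cases h : i = l <;> simp [h]
  simp_rw [h1]
  rw [Finset.sum_sub_distrib, Finset.sum_ite_eq]
  simp

lemma Ucenter_symm {n : ℕ} (A : Matrix (Fin n) (Fin n) ℝ) (hsymm : A.IsSymm) :
    (Ucenter A).IsSymm := by
  ext i j
  simp only [Matrix.transpose_apply, Ucenter, Matrix.of_apply]
  rcases eq_or_ne i j with h | h
  · simp [h]
  · rw [if_neg h, if_neg (Ne.symm h), hsymm.apply]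
    have h1 : (∑ l, A j l) = ∑ k, A k j := Finset.sum_congr rfl fun k _ => hsymm.apply k j
    have h2 : (∑ k, A k i) = ∑ l, A i l := Finset.sum_congr rfl fun k _ => hsymm.apply i k
    rw [h1, h2]
    ring

lemma Ucenter_row_sum {n : ℕ} (hn : 2 < n) (A : Matrix (Fin n) (Fin n) ℝ)
    (hsymm : A.IsSymm) (hdiag : ∀ i, A i i = 0) (i : Fin n) :
    ∑ l, Ucenter A i l = 0 := by
  have hn2 : ((n : ℝ) - 2) ≠ 0 := by
    have : (2 : ℝ) < n := by exact_mod_cast hn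
    linarith
  have hn1 : ((n : ℝ) - 1) ≠ 0 := by
    have : (2 : ℝ) < n := by exact_mod_cast hn
    linarith
  simp only [Ucenter, Matrix.of_apply]
  rw [sum_ite_zero_eq]
  have hcol : ∀ j, (∑ k, A k j) = ∑ l, A j l :=
    fun j => Finset.sum_congr rfl fun k _ => hsymm.apply j k
  simp_rw [hcol, Finset.sum_add_distrib, Finset.sum_sub_distrib, Finset.sum_const,
    Finset.card_univ, Fintype.card_fin, nsmul_eq_mul, ← Finset.sum_div]
  rw [hdiag i]
  have hS : (∑ l, ∑ l', A l l') = ∑ k, ∑ l, A k l := rfl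
  field_simp
  ring

lemma Ucenter_col_sum {n : ℕ} (hn : 2 < n) (A : Matrix (Fin n) (Fin n) ℝ)
    (hsymm : A.IsSymm) (hdiag : ∀ i, A i i = 0) (j : Fin n) :
    ∑ k, Ucenter A k j = 0 := by
  have h : ∀ k, Ucenter A k j = Ucenter A j k :=
    fun k => ((Ucenter_symm A hsymm).apply j k).symm ▸ rfl
  calc ∑ k, Ucenter A k j = ∑ k, Ucenter A j k :=
        Finset.sum_congr rfl fun k _ => ((Ucenter_symm A hsymm).apply k j).symm
    _ = 0 := Ucenter_row_sum hn A hsymm hdiag j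

/-- U-centering is idempotent: the U-centered matrix of `Ã` equals `Ã`. -/
theorem Ucenter_idem {n : ℕ} (hn : 2 < n)
    (A : Matrix (Fin n) (Fin n) ℝ) (hsymm : A.IsSymm)
    (hdiag : ∀ i, A i i = 0) :
    Ucenter (Ucenter A) = Ucenter A := by
  funext i j
  rcases eq_or_ne i j with h | h
  · simp [Ucenter, h]
  · show (Ucenter (Ucenter A)) i j = Ucenter A i j
    rw [show (Ucenter (Ucenter A)) i j = _ from rfl]
    simp only [Ucenter, Matrix.of_apply, if_neg h]
    have hrow := Ucenter_row_sum hn A hsymm hdiag i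
    have hcol := Ucenter_col_sum hn A hsymm hdiag j
    have htot : (∑ k, ∑ l, Ucenter A k l) = 0 := by
      simp_rw [Ucenter_row_sum hn A hsymm hdiag]
      simp
    simp only [Ucenter, Matrix.of_apply] at hrow hcol htot
    rw [hrow, hcol, htot]
    simp [Ucenter, Matrix.of_apply, if_neg h]
end

section
/- Let n > 2 and let A be an n×n real symmetric matrix with zero diagonal, and let Ã be its U-centered matrix. Then Ã is invariant under double centering: if B is the matrix obtained by double centering Ã, i.e. B_{ij} = Ã_{ij} − (1/n)Σ_{ℓ} Ã_{iℓ} − (1/n)Σ_{k} Ã_{kj} + (1/n²)Σ_{k,ℓ} Ã_{kℓ}, then B = Ã. -/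
/-!
For any `A`, the `i`-th row sum of `Ucenter A` is `(cᵢ - rᵢ) / (n - 2) - aᵢᵢ`, where `rᵢ`, `cᵢ` are
the `i`-th row and column sums of `A`; since `Ucenter` commutes with transposition, column sums
behave the same way. For symmetric `A` with zero diagonal all row and column sums of `Ucenter A`
therefore vanish, and double centering fixes every such matrix.
-/

open Finset
open scoped Matrix

def Matrix.doubleCenter {ι K : Type*} [Fintype ι] [Field K] (M : Matrix ι ι K) :
    Matrix ι ι K :=
  Matrix.of fun i j => M i j - (∑ l, M i l) / Fintype.card ι - (∑ k, M k j) / Fintype.card ι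
    + (∑ k, ∑ l, M k l) / (Fintype.card ι : K) ^ 2

theorem Matrix.doubleCenter_eq_self {ι K : Type*} [Fintype ι] [Field K] {M : Matrix ι ι K}
    (hrow : ∀ i, ∑ l, M i l = 0) (hcol : ∀ j, ∑ k, M k j = 0) :
    M.doubleCenter = M := by
  ext i j
  simp [doubleCenter, hrow, hcol]

theorem Ucenter_transpose {n : ℕ} (A : Matrix (Fin n) (Fin n) ℝ) :
    Ucenter Aᵀ = (Ucenter A)ᵀ := by
  ext i j
  simp only [Ucenter, Matrix.transpose_apply, Matrix.of_apply, eq_comm (a := i)]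
  rw [Finset.sum_comm]
  split_ifs <;> ring

theorem sum_Ucenter_row {n : ℕ} (hn : 2 < n) (A : Matrix (Fin n) (Fin n) ℝ) (i : Fin n) :
    ∑ l, Ucenter A i l = (∑ k, A k i - ∑ l, A i l) / ((n : ℝ) - 2) - A i i := by
  have hn' : (2 : ℝ) < n := by exact_mod_cast hn
  have h2 : (n : ℝ) - 2 ≠ 0 := by linarith
  have h1 : (n : ℝ) - 1 ≠ 0 := by linarith
  set g : Fin n → ℝ := fun l => A i l - (∑ l, A i l) / ((n : ℝ) - 2) - (∑ k, A k l) / ((n : ℝ) - 2)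
      + (∑ k, ∑ l, A k l) / (((n : ℝ) - 1) * ((n : ℝ) - 2)) with hg
  have hoff : ∀ l, Ucenter A i l = g l - if i = l then g l else 0 := by
    intro l
    simp only [Ucenter, Matrix.of_apply, hg]
    split_ifs <;> ring
  simp only [hoff, sum_sub_distrib, sum_ite_eq, mem_univ, if_true, hg, sum_add_distrib,
    ← sum_div, sum_const, card_univ, Fintype.card_fin, nsmul_eq_mul]
  rw [sum_comm (f := fun k l => A k l)]
  field_simp
  ring

theorem sum_Ucenter_col {n : ℕ} (hn : 2 < n) (A : Matrix (Fin n) (Fin n) ℝ) (j : Fin n) :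
    ∑ k, Ucenter A k j = (∑ l, A j l - ∑ k, A k j) / ((n : ℝ) - 2) - A j j := by
  simpa [Ucenter_transpose] using sum_Ucenter_row hn Aᵀ j

/-- A U-centered matrix is invariant under double centering. -/
theorem Ucenter_doubleCenter_invariant {n : ℕ} (hn : 2 < n)
    (A : Matrix (Fin n) (Fin n) ℝ) (hsymm : A.IsSymm)
    (hdiag : ∀ i, A i i = 0)
    (B : Matrix (Fin n) (Fin n) ℝ)
    (hB : ∀ i j, B i j = Ucenter A i j - (∑ l, Ucenter A i l) / (n : ℝ)
      - (∑ k, Ucenter A k j) / (n : ℝ)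
      + (∑ k, ∑ l, Ucenter A k l) / ((n : ℝ) ^ 2)) :
    B = Ucenter A := by
  have hsum : ∀ i, ∑ k, A k i = ∑ l, A i l := fun i => sum_congr rfl fun k _ => hsymm.apply i k
  have hB' : B = (Ucenter A).doubleCenter := by
    ext i j
    simp [Matrix.doubleCenter, hB]
  rw [hB']
  exact Matrix.doubleCenter_eq_self (fun i => by simp [sum_Ucenter_row hn, hsum, hdiag])
    (fun j => by simp [sum_Ucenter_col hn, hsum, hdiag])
end

section
/- For n ≥ 4, the form (C · D) := (1/(n(n−3))) Σ_{i≠j} C_{ij} D_{ij} is a real inner product on the vector space of n×n real symmetric matrices with zero diagonal: it is bilinear, symmetric, satisfies (C · C) ≥ 0 for every such C, and (C · C) = 0 if and only if C is the zero matrix. Consequently the linear span H_n of all U-centered distance matrices of n-point samples, equipped with this form, is a finite-dimensional real inner product (hence Hilbert) space. -/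
/-- The inner product `(C · D) = (1/(n(n−3))) Σ_{i≠j} C_ij D_ij`. -/
noncomputable def ipU {n : ℕ} (C D : Matrix (Fin n) (Fin n) ℝ) : ℝ :=
  (∑ i, ∑ j, if i = j then 0 else C i j * D i j) / ((n : ℝ) * ((n : ℝ) - 3))

/-- The linear span of all U-centered distance matrices of `n`-point samples
in Euclidean spaces of all dimensions `p ≥ 1`. -/
noncomputable def Hn (n : ℕ) : Submodule ℝ (Matrix (Fin n) (Fin n) ℝ) :=
  Submodule.span ℝ {M | ∃ p : ℕ, 1 ≤ p ∧ ∃ x : Fin n → EuclideanSpace ℝ (Fin p),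
    M = Ucenter (Matrix.of fun i j => dist (x i) (x j))}

open Finset

section ipU

variable {n : ℕ}

theorem ipU_eq_sum_offDiag (C D : Matrix (Fin n) (Fin n) ℝ) :
    ipU C D = (∑ p ∈ univ.offDiag, C p.1 p.2 * D p.1 p.2) / ((n : ℝ) * ((n : ℝ) - 3)) := by
  have hoff : (univ : Finset (Fin n)).offDiag = (univ ×ˢ univ).filter fun p => p.1 ≠ p.2 := by
    ext; simp
  simp only [ipU, hoff, sum_filter, sum_product, ite_not]

theorem ipU_comm (C D : Matrix (Fin n) (Fin n) ℝ) : ipU C D = ipU D C := by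
  simp only [ipU_eq_sum_offDiag, mul_comm]

theorem ipU_add_left (C C' D : Matrix (Fin n) (Fin n) ℝ) :
    ipU (C + C') D = ipU C D + ipU C' D := by
  simp only [ipU_eq_sum_offDiag, Matrix.add_apply, add_mul, sum_add_distrib, add_div]

theorem ipU_smul_left (c : ℝ) (C D : Matrix (Fin n) (Fin n) ℝ) :
    ipU (c • C) D = c * ipU C D := by
  simp only [ipU_eq_sum_offDiag, Matrix.smul_apply, smul_eq_mul, mul_assoc, ← mul_sum, mul_div_assoc]

theorem ipU_self_nonneg (hn : 3 ≤ n) (C : Matrix (Fin n) (Fin n) ℝ) : 0 ≤ ipU C C := by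
  rw [ipU_eq_sum_offDiag]
  have : (3 : ℝ) ≤ n := by exact_mod_cast hn
  exact div_nonneg (sum_nonneg fun p _ => mul_self_nonneg _) (by nlinarith)

theorem ipU_self_eq_zero_iff (hn : 3 < n) {C : Matrix (Fin n) (Fin n) ℝ} (hC : ∀ i, C i i = 0) :
    ipU C C = 0 ↔ C = 0 := by
  have : (3 : ℝ) < n := by exact_mod_cast hn
  rw [ipU_eq_sum_offDiag, div_eq_zero_iff, or_iff_left (by nlinarith),
    sum_eq_zero_iff_of_nonneg fun p _ => mul_self_nonneg _]
  constructor
  · intro h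
    ext i j
    obtain rfl | hij := eq_or_ne i j
    · exact hC i
    · exact mul_self_eq_zero.mp (h (i, j) (by simpa using hij))
  · rintro rfl p _
    simp

end ipU

/-- For `n ≥ 4`, `(C · D) = (1/(n(n−3))) Σ_{i≠j} C_ij D_ij` is a real inner product
on the symmetric zero-diagonal `n×n` matrices: bilinear, symmetric,
`(C·C) ≥ 0`, and `(C·C) = 0` iff `C = 0`; consequently the linear span `H_n` of
U-centered distance matrices, equipped with this form, is a finite-dimensional
real inner product (hence Hilbert) space. -/
theorem ipU_inner_product_space (n : ℕ) (hn : 4 ≤ n) :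
    (∀ C D : Matrix (Fin n) (Fin n) ℝ, ipU C D = ipU D C) ∧
    (∀ (c d : ℝ) (C C' D : Matrix (Fin n) (Fin n) ℝ),
      ipU (c • C + d • C') D = c * ipU C D + d * ipU C' D) ∧
    (∀ (c d : ℝ) (C D D' : Matrix (Fin n) (Fin n) ℝ),
      ipU C (c • D + d • D') = c * ipU C D + d * ipU C D') ∧
    (∀ C : Matrix (Fin n) (Fin n) ℝ, 0 ≤ ipU C C) ∧
    (∀ C : Matrix (Fin n) (Fin n) ℝ, C.IsSymm → (∀ i, C i i = 0) →
      (ipU C C = 0 ↔ C = 0)) ∧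
    FiniteDimensional ℝ (Hn n) := by
  refine ⟨ipU_comm, fun c d C C' D => ?_, fun c d C D D' => ?_, ipU_self_nonneg (by omega),
    fun C _ hC => ipU_self_eq_zero_iff hn hC, inferInstance⟩
  · rw [ipU_add_left, ipU_smul_left, ipU_smul_left]
  · rw [ipU_comm, ipU_add_left, ipU_smul_left, ipU_smul_left, ipU_comm D, ipU_comm D']
end

section
/- Let n > 3 and let A = (a_{ij}) and B = (b_{ij}) be n×n real symmetric matrices with zero diagonal, with U-centered matrices Ã and B̃. Set a_{k.} := Σ_{ℓ=1}^n a_{kℓ}, a_{..} := Σ_{k,ℓ=1}^n a_{kℓ} (and similarly for B), and define T₁ := Σ_{k≠ℓ} a_{kℓ}b_{kℓ}, T₂ := a_{..}·b_{..}, T₃ := Σ_{k=1}^n a_{k.}b_{k.}. Then Σ_{i≠j} Ã_{ij} B̃_{ij} = T₁ + T₂/((n−1)(n−2)) − 2T₃/(n−2); equivalently, n(n−3)(Ã · B̃) = T₁ + T₂/((n−1)(n−2)) − 2T₃/(n−2). -/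
set_option maxHeartbeats 2000000 in
/-- Expansion of `Σ_{i≠j} Ã_ij B̃_ij` in terms of
`T₁ = Σ_{k≠ℓ} a_kℓ b_kℓ`, `T₂ = a_.. b_..`, `T₃ = Σ_k a_k. b_k.`. -/
theorem Ucenter_inner_expansion {n : ℕ} (hn : 3 < n)
    (A B : Matrix (Fin n) (Fin n) ℝ)
    (hAsymm : A.IsSymm) (hAdiag : ∀ i, A i i = 0)
    (hBsymm : B.IsSymm) (hBdiag : ∀ i, B i i = 0) :
    (∑ i, ∑ j, if i = j then 0 else Ucenter A i j * Ucenter B i j) =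
      (∑ k, ∑ l, if k = l then 0 else A k l * B k l)
      + (∑ k, ∑ l, A k l) * (∑ k, ∑ l, B k l) / (((n : ℝ) - 1) * ((n : ℝ) - 2))
      - 2 * (∑ k, (∑ l, A k l) * (∑ l, B k l)) / ((n : ℝ) - 2) := by
  have hn4 : (4 : ℝ) ≤ (n : ℝ) := by exact_mod_cast hn
  have hm0 : ((n : ℝ) - 2) ≠ 0 := by intro h; nlinarith
  have hp0 : ((n : ℝ) - 1) ≠ 0 := by intro h; nlinarith
  obtain ⟨m, hmdef⟩ : ∃ m : ℝ, m = (n : ℝ) - 2 := ⟨_, rfl⟩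
  obtain ⟨p, hpdef⟩ : ∃ p : ℝ, p = (n : ℝ) - 1 := ⟨_, rfl⟩
  obtain ⟨rA, hrA⟩ : ∃ r : Fin n → ℝ, ∀ i, r i = ∑ l, A i l := ⟨_, fun _ => rfl⟩
  obtain ⟨rB, hrB⟩ : ∃ r : Fin n → ℝ, ∀ i, r i = ∑ l, B i l := ⟨_, fun _ => rfl⟩
  obtain ⟨sA, hsA⟩ : ∃ s : ℝ, s = ∑ i, rA i := ⟨_, rfl⟩
  obtain ⟨sB, hsB⟩ : ∃ s : ℝ, s = ∑ i, rB i := ⟨_, rfl⟩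
  obtain ⟨t1, ht1⟩ : ∃ t : ℝ, t = ∑ i, ∑ j, A i j * B i j := ⟨_, rfl⟩
  obtain ⟨t3, ht3⟩ : ∃ t : ℝ, t = ∑ i, rA i * rB i := ⟨_, rfl⟩
  obtain ⟨FA, hFA⟩ : ∃ F : Fin n → Fin n → ℝ,
      ∀ i j, F i j = A i j - rA i / m - rA j / m + sA / (p * m) := ⟨_, fun _ _ => rfl⟩
  obtain ⟨FB, hFB⟩ : ∃ F : Fin n → Fin n → ℝ,
      ∀ i j, F i j = B i j - rB i / m - rB j / m + sB / (p * m) := ⟨_, fun _ _ => rfl⟩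
  -- column sums equal row sums
  have hcA : ∀ j, (∑ k, A k j) = rA j := by
    intro j; rw [hrA]; exact Finset.sum_congr rfl fun k _ => hAsymm.apply j k
  have hcB : ∀ j, (∑ k, B k j) = rB j := by
    intro j; rw [hrB]; exact Finset.sum_congr rfl fun k _ => hBsymm.apply j k
  have hsA' : (∑ k, ∑ l, A k l) = sA := by
    rw [hsA]; exact Finset.sum_congr rfl fun k _ => (hrA k).symm
  have hsB' : (∑ k, ∑ l, B k l) = sB := by
    rw [hsB]; exact Finset.sum_congr rfl fun k _ => (hrB k).symm
  -- rewrite the RHS pieces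
  have hR1 : (∑ k, ∑ l, if k = l then (0 : ℝ) else A k l * B k l) = t1 := by
    rw [ht1]
    refine Finset.sum_congr rfl fun k _ => Finset.sum_congr rfl fun l _ => ?_
    split_ifs with h
    · rw [h, hAdiag, zero_mul]
    · rfl
  have hR3 : (∑ k, (∑ l, A k l) * (∑ l, B k l)) = t3 := by
    rw [ht3]; exact Finset.sum_congr rfl fun k _ => by rw [hrA, hrB]
  rw [hR1, hsA', hsB', hR3]
  -- rewrite the LHS in terms of FA, FB
  have hL : (∑ i, ∑ j, if i = j then (0 : ℝ) else Ucenter A i j * Ucenter B i j)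
      = ∑ i, ∑ j, if i = j then (0 : ℝ) else FA i j * FB i j := by
    refine Finset.sum_congr rfl fun i _ => Finset.sum_congr rfl fun j _ => ?_
    split_ifs with h
    · rfl
    · have hUA : Ucenter A i j = FA i j := by
        simp only [Ucenter, Matrix.of_apply, if_neg h, hFA, ← hrA, hcA, ← hsA, ← hmdef, ← hpdef]
      have hUB : Ucenter B i j = FB i j := by
        simp only [Ucenter, Matrix.of_apply, if_neg h, hFB, ← hrB, hcB, ← hsB, ← hmdef, ← hpdef]
      rw [hUA, hUB]
  -- split off the diagonal
  have hsplit : ∀ f : Fin n → Fin n → ℝ,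
      (∑ i, ∑ j, if i = j then (0 : ℝ) else f i j)
        = (∑ i, ∑ j, f i j) - ∑ i, f i i := by
    intro f
    rw [← Finset.sum_sub_distrib]
    refine Finset.sum_congr rfl fun i _ => ?_
    have h1 : (∑ j, if i = j then (0 : ℝ) else f i j)
        + (∑ j, if i = j then f i j else 0) = ∑ j, f i j := by
      rw [← Finset.sum_add_distrib]
      refine Finset.sum_congr rfl fun j _ => ?_
      split_ifs <;> ring
    have h2 : (∑ j, if i = j then f i j else (0 : ℝ)) = f i i := by simp
    rw [h2] at h1
    linarith
  -- auxiliary double sums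
  have hQ : (∑ i, ∑ j, A i j * rB j) = t3 := by
    rw [Finset.sum_comm, ht3]
    refine Finset.sum_congr rfl fun j _ => ?_
    rw [← Finset.sum_mul, hcA]
  have hRR : (∑ i, ∑ j, rA j * B i j) = t3 := by
    rw [Finset.sum_comm, ht3]
    refine Finset.sum_congr rfl fun j _ => ?_
    rw [← Finset.mul_sum, hcB]
  -- inner sum expansion
  have hinner : ∀ i, (∑ j, FA i j * FB i j) =
      (∑ j, A i j * B i j) - (∑ j, A i j * rB j) / m - (∑ j, rA j * B i j) / m
      + ((n : ℝ) / m ^ 2 - 2 / m) * (rA i * rB i)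
      + (sB / (p * m) - (n : ℝ) * sB / (p * m ^ 2) + sB / m ^ 2) * rA i
      + (sA / (p * m) - (n : ℝ) * sA / (p * m ^ 2) + sA / m ^ 2) * rB i
      + ((n : ℝ) * sA * sB / (p ^ 2 * m ^ 2) - 2 * sA * sB / (p * m ^ 2) + t3 / m ^ 2) := by
    intro i
    have e : ∀ j, FA i j * FB i j =
        A i j * B i j
        + (sB / (p * m) - rB i / m) * A i j
        - (A i j * rB j) / m
        + (sA / (p * m) - rA i / m) * B i j
        - (rA j * B i j) / m
        + ((sA / (p * m) - rA i / m) * (sB / (p * m) - rB i / m))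
        - ((sA / (p * m) - rA i / m) / m) * rB j
        - ((sB / (p * m) - rB i / m) / m) * rA j
        + (rA j * rB j) / m ^ 2 := fun j => by rw [hFA, hFB]; ring
    calc (∑ j, FA i j * FB i j)
        = ∑ j, (A i j * B i j
          + (sB / (p * m) - rB i / m) * A i j
          - (A i j * rB j) / m
          + (sA / (p * m) - rA i / m) * B i j
          - (rA j * B i j) / m
          + ((sA / (p * m) - rA i / m) * (sB / (p * m) - rB i / m))
          - ((sA / (p * m) - rA i / m) / m) * rB j
          - ((sB / (p * m) - rB i / m) / m) * rA j
          + (rA j * rB j) / m ^ 2) := Finset.sum_congr rfl fun j _ => e j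
      _ = _ := by
          simp only [Finset.sum_add_distrib, Finset.sum_sub_distrib, ← Finset.sum_div,
            ← Finset.mul_sum, Finset.sum_const, Finset.card_univ, Fintype.card_fin,
            nsmul_eq_mul, ← hrA, ← hrB, ← hsA, ← hsB, ← ht3]
          ring
  -- full off-diagonal-free double sum
  have hS : (∑ i, ∑ j, FA i j * FB i j) =
      t1 - t3 / m - t3 / m
      + ((n : ℝ) / m ^ 2 - 2 / m) * t3
      + (sB / (p * m) - (n : ℝ) * sB / (p * m ^ 2) + sB / m ^ 2) * sA
      + (sA / (p * m) - (n : ℝ) * sA / (p * m ^ 2) + sA / m ^ 2) * sB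
      + (n : ℝ) * ((n : ℝ) * sA * sB / (p ^ 2 * m ^ 2) - 2 * sA * sB / (p * m ^ 2)
          + t3 / m ^ 2) := by
    calc (∑ i, ∑ j, FA i j * FB i j)
        = ∑ i, ((∑ j, A i j * B i j) - (∑ j, A i j * rB j) / m - (∑ j, rA j * B i j) / m
          + ((n : ℝ) / m ^ 2 - 2 / m) * (rA i * rB i)
          + (sB / (p * m) - (n : ℝ) * sB / (p * m ^ 2) + sB / m ^ 2) * rA i
          + (sA / (p * m) - (n : ℝ) * sA / (p * m ^ 2) + sA / m ^ 2) * rB i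
          + ((n : ℝ) * sA * sB / (p ^ 2 * m ^ 2) - 2 * sA * sB / (p * m ^ 2)
              + t3 / m ^ 2)) := Finset.sum_congr rfl fun i _ => hinner i
      _ = _ := by
          simp only [Finset.sum_add_distrib, Finset.sum_sub_distrib, ← Finset.sum_div,
            ← Finset.mul_sum, Finset.sum_const, Finset.card_univ, Fintype.card_fin,
            nsmul_eq_mul, ← ht1, ← ht3, ← hsA, ← hsB, hQ, hRR]
          ring
  -- diagonal sum
  have hdiag : (∑ i, FA i i * FB i i) =
      4 * t3 / m ^ 2 - 2 * sB / (p * m ^ 2) * sA - 2 * sA / (p * m ^ 2) * sB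
        + (n : ℝ) * (sA * sB / (p ^ 2 * m ^ 2)) := by
    calc (∑ i, FA i i * FB i i)
        = ∑ i, (4 * (rA i * rB i) / m ^ 2 - 2 * sB / (p * m ^ 2) * rA i
            - 2 * sA / (p * m ^ 2) * rB i + sA * sB / (p ^ 2 * m ^ 2)) := by
          refine Finset.sum_congr rfl fun i _ => ?_
          rw [hFA, hFB, hAdiag i, hBdiag i]; ring
      _ = _ := by
          simp only [Finset.sum_add_distrib, Finset.sum_sub_distrib, ← Finset.sum_div,
            ← Finset.mul_sum, Finset.sum_const, Finset.card_univ, Fintype.card_fin,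
            nsmul_eq_mul, ← ht3, ← hsA, ← hsB]
          ring
  rw [hL, hsplit, hS, hdiag, hmdef, hpdef]
  field_simp
  ring
end

section
/- Let (X₁,Y₁),…,(Xₙ,Yₙ), n > 3, be iid copies of a pair (X,Y) of random vectors with X ∈ ℝ^p and Y ∈ ℝ^q, and set a_{kℓ} := |X_k − X_ℓ|, b_{kℓ} := |Y_k − Y_ℓ| (Euclidean norms). Define T₁ := Σ_{k≠ℓ} a_{kℓ}b_{kℓ}, T₂ := (Σ_{k,ℓ} a_{kℓ})(Σ_{k,ℓ} b_{kℓ}), T₃ := Σ_k (Σ_ℓ a_{kℓ})(Σ_ℓ b_{kℓ}). Let α := E|X−X'|, β := E|Y−Y'|, γ := E[|X−X'||Y−Y'|], δ := E[|X−X'||Y−Y''|], where (X,Y),(X',Y'),(X'',Y'') are iid, and assume these expectations are finite. Then E[T₁] = n(n−1)γ, E[T₂] = n(n−1){(n−2)(n−3)αβ + 2γ + 4(n−2)δ}, and E[T₃] = n(n−1){(n−2)δ + γ}. -/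
/-!
Expanding the products, each statistic is a sum of terms `a k l * b m r` with
`a k l = ‖X k - X l‖` and `b m r = ‖Y m - Y r‖`. Since the pairs `(X i, Y i)` are iid, the
expectation of such a term depends only on how the indices coincide: it is `0` if `k = l` or
`m = r`, `γ` if `{k, l} = {m, r}`, `δ` if the two pairs share exactly one index, and `α * β` if
they are disjoint (by independence). Counting the index patterns row by row gives the formulas.
-/

open MeasureTheory ProbabilityTheory Finset

def HasIntegral {Ω E : Type*} [MeasurableSpace Ω] [NormedAddCommGroup E] [NormedSpace ℝ E]
    (μ : Measure Ω) (f : Ω → E) (c : E) : Prop :=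
  Integrable f μ ∧ ∫ ω, f ω ∂μ = c

namespace HasIntegral

variable {Ω ι : Type*} [MeasurableSpace Ω] {μ : Measure Ω}

theorem zero {E : Type*} [NormedAddCommGroup E] [NormedSpace ℝ E] :
    HasIntegral μ (fun _ => (0 : E)) 0 :=
  ⟨integrable_zero _ _ _, integral_zero _ _⟩

theorem sum {E : Type*} [NormedAddCommGroup E] [NormedSpace ℝ E] {s : Finset ι}
    {f : ι → Ω → E} {c : ι → E} (h : ∀ i ∈ s, HasIntegral μ (f i) (c i)) :
    HasIntegral μ (fun ω => ∑ i ∈ s, f i ω) (∑ i ∈ s, c i) :=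
  ⟨integrable_finsetSum s fun i hi => (h i hi).1, by
    rw [integral_finsetSum s fun i hi => (h i hi).1]
    exact Finset.sum_congr rfl fun i hi => (h i hi).2⟩

theorem of_identDistrib {Ω' : Type*} [MeasurableSpace Ω'] {ν : Measure Ω'} {f : Ω → ℝ}
    {g : Ω' → ℝ} (hfg : IdentDistrib f g μ ν) (hg : Integrable g ν) :
    HasIntegral μ f (∫ x, g x ∂ν) :=
  ⟨hfg.integrable_iff.2 hg, hfg.integral_eq⟩

variable [Fintype ι] [DecidableEq ι] {f : ι → Ω → ℝ} {z : ℝ}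

theorem sum_of_eq_off (s : Finset ι) (hs : ∀ m ∈ s, Integrable (f m) μ)
    (hoff : ∀ m ∉ s, HasIntegral μ (f m) z) :
    HasIntegral μ (fun ω => ∑ m, f m ω)
      (∑ m ∈ s, ∫ ω, f m ω ∂μ + ((Fintype.card ι : ℝ) - #s) * z) := by
  have hint : ∀ m ∈ univ, Integrable (f m) μ := fun m _ => by
    by_cases hm : m ∈ s
    exacts [hs m hm, (hoff m hm).1]
  refine ⟨integrable_finsetSum _ hint, ?_⟩
  rw [integral_finsetSum _ hint, ← sum_add_sum_compl s,
    sum_congr rfl fun m hm => (hoff m (mem_compl.1 hm)).2, sum_const, card_compl, nsmul_eq_mul,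
    Nat.cast_sub (card_le_univ s)]

theorem sum_of_eq_off_singleton (a : ι) {ca : ℝ} (ha : HasIntegral μ (f a) ca)
    (hoff : ∀ m, m ≠ a → HasIntegral μ (f m) z) :
    HasIntegral μ (fun ω => ∑ m, f m ω) (ca + ((Fintype.card ι : ℝ) - 1) * z) := by
  have := sum_of_eq_off (μ := μ) (f := f) {a} (by simpa using ha.1) (by simpa using hoff)
  rwa [sum_singleton, card_singleton, ha.2, Nat.cast_one] at this

theorem sum_of_eq_off_pair {a b : ι} (hab : a ≠ b) {ca cb : ℝ} (ha : HasIntegral μ (f a) ca)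
    (hb : HasIntegral μ (f b) cb) (hoff : ∀ m, m ≠ a → m ≠ b → HasIntegral μ (f m) z) :
    HasIntegral μ (fun ω => ∑ m, f m ω) (ca + cb + ((Fintype.card ι : ℝ) - 2) * z) := by
  have := sum_of_eq_off (μ := μ) (f := f) {a, b} (by simp [ha.1, hb.1]) (by simpa using hoff)
  rwa [sum_pair hab, card_pair hab, ha.2, hb.2, Nat.cast_two] at this

theorem sum_of_eq_off_triple {a b c : ι} (hab : a ≠ b) (hac : a ≠ c) (hbc : b ≠ c)
    {ca cb cc : ℝ} (ha : HasIntegral μ (f a) ca) (hb : HasIntegral μ (f b) cb)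
    (hc : HasIntegral μ (f c) cc) (hoff : ∀ m, m ≠ a → m ≠ b → m ≠ c → HasIntegral μ (f m) z) :
    HasIntegral μ (fun ω => ∑ m, f m ω) (ca + cb + cc + ((Fintype.card ι : ℝ) - 3) * z) := by
  have := sum_of_eq_off (μ := μ) (f := f) {a, b, c} (by simp [ha.1, hb.1, hc.1])
    (by simpa using hoff)
  rwa [sum_insert (by simp [hab, hac]), sum_pair hbc, card_insert_of_notMem (by simp [hab, hac]),
    card_pair hbc, ha.2, hb.2, hc.2, ← add_assoc] at this

theorem sum_sum_of_offDiag {f : ι → ι → Ω → ℝ} {c : ℝ} (hdiag : ∀ k, HasIntegral μ (f k k) 0)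
    (hoff : ∀ k l, k ≠ l → HasIntegral μ (f k l) c) :
    HasIntegral μ (fun ω => ∑ k, ∑ l, f k l ω)
      (Fintype.card ι * ((Fintype.card ι : ℝ) - 1) * c) := by
  have := HasIntegral.sum (s := univ) fun k _ =>
    sum_of_eq_off_singleton k (hdiag k) fun l hlk => hoff k l hlk.symm
  rwa [sum_const, card_univ, nsmul_eq_mul, zero_add, ← mul_assoc] at this

end HasIntegral

namespace DistanceCovariance

section Statistics

variable {Ω ι : Type*} [Fintype ι]

def T₁ [DecidableEq ι] (a b : ι → ι → Ω → ℝ) (ω : Ω) : ℝ :=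
  ∑ k, ∑ l, if k = l then 0 else a k l ω * b k l ω

def T₂ (a b : ι → ι → Ω → ℝ) (ω : Ω) : ℝ :=
  (∑ k, ∑ l, a k l ω) * (∑ k, ∑ l, b k l ω)

def T₃ (a b : ι → ι → Ω → ℝ) (ω : Ω) : ℝ :=
  ∑ k, (∑ l, a k l ω) * (∑ l, b k l ω)

theorem T₂_eq_sum (a b : ι → ι → Ω → ℝ) :
    T₂ a b = fun ω => ∑ k, ∑ l, ∑ m, ∑ r, a k l ω * b m r ω := by
  funext ω
  simp only [T₂, sum_mul_sum]
  exact sum_congr rfl fun k _ => sum_comm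

theorem T₃_eq_sum (a b : ι → ι → Ω → ℝ) :
    T₃ a b = fun ω => ∑ k, ∑ l, ∑ r, a k l ω * b k r ω := by
  funext ω
  simp only [T₃, sum_mul_sum]

end Statistics

variable {Ω ι : Type*} [MeasurableSpace Ω] {μ : Measure Ω} {a b : ι → ι → Ω → ℝ} {α β γ δ : ℝ}

theorem hasIntegral_mul_of_diag_right {k l m : ι} (hb_diag : ∀ k, b k k = 0) :
    HasIntegral μ (fun ω => a k l ω * b m m ω) 0 := by
  simpa [hb_diag] using HasIntegral.zero

variable [Fintype ι] [DecidableEq ι]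

theorem hasIntegral_sum_mul_same_row (hb_diag : ∀ k, b k k = 0)
    (hγ : ∀ k l, k ≠ l → HasIntegral μ (fun ω => a k l ω * b k l ω) γ)
    (hδ : ∀ k l m, k ≠ l → k ≠ m → l ≠ m → HasIntegral μ (fun ω => a k l ω * b k m ω) δ)
    {k l : ι} (hkl : k ≠ l) :
    HasIntegral μ (fun ω => ∑ r, a k l ω * b k r ω)
      (γ + ((Fintype.card ι : ℝ) - 2) * δ) := by
  simpa only [add_zero] using HasIntegral.sum_of_eq_off_pair hkl.symm (hγ k l hkl)
    (hasIntegral_mul_of_diag_right hb_diag) fun r hrl hrk =>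
      hδ k l r hkl (Ne.symm hrk) (Ne.symm hrl)

theorem hasIntegral_sum_mul_other_row (ha_symm : ∀ k l, a k l = a l k)
    (hb_symm : ∀ k l, b k l = b l k) (hb_diag : ∀ k, b k k = 0)
    (hδ : ∀ k l m, k ≠ l → k ≠ m → l ≠ m → HasIntegral μ (fun ω => a k l ω * b k m ω) δ)
    (hαβ : ∀ k l m r, k ≠ l → m ≠ r → k ≠ m → k ≠ r → l ≠ m → l ≠ r →
      HasIntegral μ (fun ω => a k l ω * b m r ω) (α * β))
    {k l m : ι} (hkl : k ≠ l) (hkm : k ≠ m) (hlm : l ≠ m) :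
    HasIntegral μ (fun ω => ∑ r, a k l ω * b m r ω)
      (2 * δ + ((Fintype.card ι : ℝ) - 3) * (α * β)) := by
  have hk : HasIntegral μ (fun ω => a k l ω * b m k ω) δ := by
    rw [hb_symm m k]; exact hδ k l m hkl hkm hlm
  have hl : HasIntegral μ (fun ω => a k l ω * b m l ω) δ := by
    rw [ha_symm k l, hb_symm m l]; exact hδ l k m hkl.symm hlm hkm
  convert HasIntegral.sum_of_eq_off_triple hkl hkm hlm hk hl
    (hasIntegral_mul_of_diag_right hb_diag) fun r hrk hrl hrm =>
      hαβ k l m r hkl (Ne.symm hrm) hkm (Ne.symm hrk) hlm (Ne.symm hrl) using 1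
  ring

theorem hasIntegral_sum_sum_mul (ha_symm : ∀ k l, a k l = a l k)
    (hb_symm : ∀ k l, b k l = b l k) (hb_diag : ∀ k, b k k = 0)
    (hγ : ∀ k l, k ≠ l → HasIntegral μ (fun ω => a k l ω * b k l ω) γ)
    (hδ : ∀ k l m, k ≠ l → k ≠ m → l ≠ m → HasIntegral μ (fun ω => a k l ω * b k m ω) δ)
    (hαβ : ∀ k l m r, k ≠ l → m ≠ r → k ≠ m → k ≠ r → l ≠ m → l ≠ r →
      HasIntegral μ (fun ω => a k l ω * b m r ω) (α * β))
    {k l : ι} (hkl : k ≠ l) :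
    HasIntegral μ (fun ω => ∑ m, ∑ r, a k l ω * b m r ω)
      (((Fintype.card ι : ℝ) - 2) * ((Fintype.card ι : ℝ) - 3) * (α * β) + 2 * γ +
        4 * ((Fintype.card ι : ℝ) - 2) * δ) := by
  have hl : HasIntegral μ (fun ω => ∑ r, a k l ω * b l r ω)
      (γ + ((Fintype.card ι : ℝ) - 2) * δ) := by
    rw [ha_symm k l]; exact hasIntegral_sum_mul_same_row hb_diag hγ hδ hkl.symm
  convert HasIntegral.sum_of_eq_off_pair hkl (hasIntegral_sum_mul_same_row hb_diag hγ hδ hkl) hl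
    fun m hmk hml => hasIntegral_sum_mul_other_row ha_symm hb_symm hb_diag hδ hαβ hkl
      (Ne.symm hmk) (Ne.symm hml) using 1
  ring

theorem hasIntegral_T₁
    (hγ : ∀ k l, k ≠ l → HasIntegral μ (fun ω => a k l ω * b k l ω) γ) :
    HasIntegral μ (T₁ a b) (Fintype.card ι * ((Fintype.card ι : ℝ) - 1) * γ) :=
  HasIntegral.sum_sum_of_offDiag (fun k => by simpa using HasIntegral.zero)
    fun k l hkl => by simpa [hkl] using hγ k l hkl

theorem hasIntegral_T₂ (ha_symm : ∀ k l, a k l = a l k)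
    (hb_symm : ∀ k l, b k l = b l k) (ha_diag : ∀ k, a k k = 0) (hb_diag : ∀ k, b k k = 0)
    (hγ : ∀ k l, k ≠ l → HasIntegral μ (fun ω => a k l ω * b k l ω) γ)
    (hδ : ∀ k l m, k ≠ l → k ≠ m → l ≠ m → HasIntegral μ (fun ω => a k l ω * b k m ω) δ)
    (hαβ : ∀ k l m r, k ≠ l → m ≠ r → k ≠ m → k ≠ r → l ≠ m → l ≠ r →
      HasIntegral μ (fun ω => a k l ω * b m r ω) (α * β)) :
    HasIntegral μ (T₂ a b) (Fintype.card ι * ((Fintype.card ι : ℝ) - 1) *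
      (((Fintype.card ι : ℝ) - 2) * ((Fintype.card ι : ℝ) - 3) * (α * β) + 2 * γ +
        4 * ((Fintype.card ι : ℝ) - 2) * δ)) := by
  rw [T₂_eq_sum]
  exact HasIntegral.sum_sum_of_offDiag (fun k => by simpa [ha_diag] using HasIntegral.zero)
    fun k l hkl => hasIntegral_sum_sum_mul ha_symm hb_symm hb_diag hγ hδ hαβ hkl

theorem hasIntegral_T₃ (ha_diag : ∀ k, a k k = 0) (hb_diag : ∀ k, b k k = 0)
    (hγ : ∀ k l, k ≠ l → HasIntegral μ (fun ω => a k l ω * b k l ω) γ)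
    (hδ : ∀ k l m, k ≠ l → k ≠ m → l ≠ m → HasIntegral μ (fun ω => a k l ω * b k m ω) δ) :
    HasIntegral μ (T₃ a b) (Fintype.card ι * ((Fintype.card ι : ℝ) - 1) *
      (((Fintype.card ι : ℝ) - 2) * δ + γ)) := by
  rw [T₃_eq_sum, add_comm _ γ]
  exact HasIntegral.sum_sum_of_offDiag (fun k => by simpa [ha_diag] using HasIntegral.zero)
    fun k l hkl => hasIntegral_sum_mul_same_row hb_diag hγ hδ hkl

end DistanceCovariance

theorem ProbabilityTheory.IndepFun.hasIntegral_mul {Ω : Type*} [MeasurableSpace Ω]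
    {μ : Measure Ω} {f g : Ω → ℝ} {a b : ℝ} (hfg : IndepFun f g μ) (hf : HasIntegral μ f a)
    (hg : HasIntegral μ g b) : HasIntegral μ (fun ω => f ω * g ω) (a * b) :=
  ⟨hfg.integrable_mul hf.1 hg.1, by
    rw [hfg.integral_fun_mul_eq_mul_integral hf.1.1 hg.1.1, hf.2, hg.2]⟩

section IID

variable {Ω S ι : Type*} [MeasurableSpace Ω] [MeasurableSpace S] {μ : Measure Ω}
  {Z : ι → Ω → S}

theorem ProbabilityTheory.iIndepFun.hasIntegral_mul_comp_pair (hind : iIndepFun Z μ)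
    (hZ : ∀ i, Measurable (Z i)) {φ ψ : S × S → ℝ} (hφ : Measurable φ) (hψ : Measurable ψ)
    {k l m r : ι} (hkm : k ≠ m) (hkr : k ≠ r) (hlm : l ≠ m) (hlr : l ≠ r) {c d : ℝ}
    (hkl : HasIntegral μ (fun ω => φ (Z k ω, Z l ω)) c)
    (hmr : HasIntegral μ (fun ω => ψ (Z m ω, Z r ω)) d) :
    HasIntegral μ (fun ω => φ (Z k ω, Z l ω) * ψ (Z m ω, Z r ω)) (c * d) :=
  ((hind.indepFun_prodMk_prodMk hZ k l m r hkm hkr hlm hlr).comp hφ hψ).hasIntegral_mul hkl hmr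

variable [IsFiniteMeasure μ]

theorem ProbabilityTheory.iIndepFun.identDistrib_pair (hind : iIndepFun Z μ)
    (hZ : ∀ i, Measurable (Z i)) (hid : ∀ i j, IdentDistrib (Z i) (Z j) μ μ) {i j k l : ι}
    (hij : i ≠ j) (hkl : k ≠ l) :
    IdentDistrib (fun ω => (Z i ω, Z j ω)) (fun ω => (Z k ω, Z l ω)) μ μ where
  aemeasurable_fst := ((hZ i).prodMk (hZ j)).aemeasurable
  aemeasurable_snd := ((hZ k).prodMk (hZ l)).aemeasurable
  map_eq := by
    rw [(hind.indepFun hij).map_prod_eq_prod_map_map (hZ i).aemeasurable (hZ j).aemeasurable,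
      (hind.indepFun hkl).map_prod_eq_prod_map_map (hZ k).aemeasurable (hZ l).aemeasurable,
      (hid i k).map_eq, (hid j l).map_eq]

theorem ProbabilityTheory.iIndepFun.identDistrib_triple (hind : iIndepFun Z μ)
    (hZ : ∀ i, Measurable (Z i)) (hid : ∀ i j, IdentDistrib (Z i) (Z j) μ μ)
    {i j k i' j' k' : ι} (hij : i ≠ j) (hik : i ≠ k) (hjk : j ≠ k)
    (hij' : i' ≠ j') (hik' : i' ≠ k') (hjk' : j' ≠ k') :
    IdentDistrib (fun ω => (Z i ω, Z j ω, Z k ω)) (fun ω => (Z i' ω, Z j' ω, Z k' ω)) μ μ where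
  aemeasurable_fst := ((hZ i).prodMk ((hZ j).prodMk (hZ k))).aemeasurable
  aemeasurable_snd := ((hZ i').prodMk ((hZ j').prodMk (hZ k'))).aemeasurable
  map_eq := by
    rw [(hind.indepFun_prodMk hZ j k i hij.symm hik.symm).symm.map_prod_eq_prod_map_map
        (hZ i).aemeasurable ((hZ j).prodMk (hZ k)).aemeasurable,
      (hind.indepFun_prodMk hZ j' k' i' hij'.symm hik'.symm).symm.map_prod_eq_prod_map_map
        (hZ i').aemeasurable ((hZ j').prodMk (hZ k')).aemeasurable,
      (hid i i').map_eq, (hind.identDistrib_pair hZ hid hjk hjk').map_eq]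

theorem ProbabilityTheory.iIndepFun.hasIntegral_comp_pair (hind : iIndepFun Z μ)
    (hZ : ∀ i, Measurable (Z i)) (hid : ∀ i j, IdentDistrib (Z i) (Z j) μ μ) {φ : S × S → ℝ}
    (hφ : Measurable φ) {i j k l : ι} (hkl : k ≠ l) (hij : i ≠ j)
    (hint : Integrable (fun ω => φ (Z i ω, Z j ω)) μ) :
    HasIntegral μ (fun ω => φ (Z k ω, Z l ω)) (∫ ω, φ (Z i ω, Z j ω) ∂μ) :=
  .of_identDistrib ((hind.identDistrib_pair hZ hid hkl hij).comp hφ) hint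

theorem ProbabilityTheory.iIndepFun.hasIntegral_comp_triple (hind : iIndepFun Z μ)
    (hZ : ∀ i, Measurable (Z i)) (hid : ∀ i j, IdentDistrib (Z i) (Z j) μ μ)
    {φ : S × S × S → ℝ} (hφ : Measurable φ) {i j k i' j' k' : ι}
    (hij : i ≠ j) (hik : i ≠ k) (hjk : j ≠ k) (hij' : i' ≠ j') (hik' : i' ≠ k') (hjk' : j' ≠ k')
    (hint : Integrable (fun ω => φ (Z i' ω, Z j' ω, Z k' ω)) μ) :
    HasIntegral μ (fun ω => φ (Z i ω, Z j ω, Z k ω)) (∫ ω, φ (Z i' ω, Z j' ω, Z k' ω) ∂μ) :=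
  .of_identDistrib ((hind.identDistrib_triple hZ hid hij hik hjk hij' hik' hjk').comp hφ) hint

end IID

/-- Expected values of the statistics `T₁, T₂, T₃` for an iid sample
`(X₁,Y₁),…,(Xₙ,Yₙ)` from the joint distribution of `(X,Y)`, in terms of
`α = E|X−X'|`, `β = E|Y−Y'|`, `γ = E[|X−X'||Y−Y'|]`, `δ = E[|X−X'||Y−Y''|]`. -/
theorem expected_T1_T2_T3
    {Ω : Type*} [MeasurableSpace Ω] (μ : Measure Ω) [IsProbabilityMeasure μ]
    {n p q : ℕ} (hn : 3 < n)
    (X : Fin n → Ω → EuclideanSpace ℝ (Fin p))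
    (Y : Fin n → Ω → EuclideanSpace ℝ (Fin q))
    (hX : ∀ i, Measurable (X i)) (hY : ∀ i, Measurable (Y i))
    (hindep : iIndepFun (fun i ω => (X i ω, Y i ω)) μ)
    (hid : ∀ i j : Fin n, IdentDistrib (fun ω => (X i ω, Y i ω))
      (fun ω => (X j ω, Y j ω)) μ μ)
    (i0 : Fin n) (i1 : Fin n) (i2 : Fin n)
    (h0 : i0 = ⟨0, by omega⟩) (h1 : i1 = ⟨1, by omega⟩) (h2 : i2 = ⟨2, by omega⟩)
    (α β γ δ : ℝ)
    (hα : α = ∫ ω, ‖X i0 ω - X i1 ω‖ ∂μ)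
    (hβ : β = ∫ ω, ‖Y i0 ω - Y i1 ω‖ ∂μ)
    (hγ : γ = ∫ ω, ‖X i0 ω - X i1 ω‖ * ‖Y i0 ω - Y i1 ω‖ ∂μ)
    (hδ : δ = ∫ ω, ‖X i0 ω - X i1 ω‖ * ‖Y i0 ω - Y i2 ω‖ ∂μ)
    (hintα : Integrable (fun ω => ‖X i0 ω - X i1 ω‖) μ)
    (hintβ : Integrable (fun ω => ‖Y i0 ω - Y i1 ω‖) μ)
    (hintγ : Integrable (fun ω => ‖X i0 ω - X i1 ω‖ * ‖Y i0 ω - Y i1 ω‖) μ)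
    (hintδ : Integrable (fun ω => ‖X i0 ω - X i1 ω‖ * ‖Y i0 ω - Y i2 ω‖) μ) :
    (∫ ω, (∑ k, ∑ l, if k = l then 0 else ‖X k ω - X l ω‖ * ‖Y k ω - Y l ω‖) ∂μ
       = (n : ℝ) * ((n : ℝ) - 1) * γ) ∧
    (∫ ω, (∑ k, ∑ l, ‖X k ω - X l ω‖) * (∑ k, ∑ l, ‖Y k ω - Y l ω‖) ∂μ
       = (n : ℝ) * ((n : ℝ) - 1) *
         (((n : ℝ) - 2) * ((n : ℝ) - 3) * (α * β) + 2 * γ + 4 * ((n : ℝ) - 2) * δ)) ∧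
    (∫ ω, (∑ k, (∑ l, ‖X k ω - X l ω‖) * (∑ l, ‖Y k ω - Y l ω‖)) ∂μ
       = (n : ℝ) * ((n : ℝ) - 1) * (((n : ℝ) - 2) * δ + γ)) := by
  have hi01 : i0 ≠ i1 := by simp [h0, h1, Fin.ext_iff]
  have hi02 : i0 ≠ i2 := by simp [h0, h2, Fin.ext_iff]
  have hi12 : i1 ≠ i2 := by simp [h1, h2, Fin.ext_iff]
  have hZ : ∀ i, Measurable fun ω => (X i ω, Y i ω) := fun i => (hX i).prodMk (hY i)
  subst hα hβ hγ hδ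
  have hα := fun k l (hkl : k ≠ l) => hindep.hasIntegral_comp_pair hZ hid
    (φ := fun z => ‖z.1.1 - z.2.1‖) (by fun_prop) hkl hi01 hintα
  have hβ := fun k l (hkl : k ≠ l) => hindep.hasIntegral_comp_pair hZ hid
    (φ := fun z => ‖z.1.2 - z.2.2‖) (by fun_prop) hkl hi01 hintβ
  have hγ := fun k l (hkl : k ≠ l) => hindep.hasIntegral_comp_pair hZ hid
    (φ := fun z => ‖z.1.1 - z.2.1‖ * ‖z.1.2 - z.2.2‖) (by fun_prop) hkl hi01 hintγ
  have hδ := fun k l m (hkl : k ≠ l) (hkm : k ≠ m) (hlm : l ≠ m) =>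
    hindep.hasIntegral_comp_triple hZ hid (φ := fun z => ‖z.1.1 - z.2.1.1‖ * ‖z.1.2 - z.2.2.2‖)
      (by fun_prop) hkl hkm hlm hi01 hi02 hi12 hintδ
  have hαβ := fun k l m r (hkl : k ≠ l) (hmr : m ≠ r) (hkm : k ≠ m) (hkr : k ≠ r) (hlm : l ≠ m)
    (hlr : l ≠ r) => hindep.hasIntegral_mul_comp_pair hZ (φ := fun z => ‖z.1.1 - z.2.1‖)
      (ψ := fun z => ‖z.1.2 - z.2.2‖) (by fun_prop) (by fun_prop) hkm hkr hlm hlr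
      (hα k l hkl) (hβ m r hmr)
  set a : Fin n → Fin n → Ω → ℝ := fun k l ω => ‖X k ω - X l ω‖
  set b : Fin n → Fin n → Ω → ℝ := fun k l ω => ‖Y k ω - Y l ω‖
  have ha_symm : ∀ k l, a k l = a l k := fun k l => funext fun ω => norm_sub_rev _ _
  have hb_symm : ∀ k l, b k l = b l k := fun k l => funext fun ω => norm_sub_rev _ _
  have ha_diag : ∀ k, a k k = 0 := fun k => funext fun ω => by simp [a]
  have hb_diag : ∀ k, b k k = 0 := fun k => funext fun ω => by simp [b]
  have h₁ := (DistanceCovariance.hasIntegral_T₁ (a := a) (b := b) hγ).2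
  have h₂ := (DistanceCovariance.hasIntegral_T₂ ha_symm hb_symm ha_diag hb_diag hγ hδ hαβ).2
  have h₃ := (DistanceCovariance.hasIntegral_T₃ ha_diag hb_diag hγ hδ).2
  rw [Fintype.card_fin] at h₁ h₂ h₃
  exact ⟨h₁, h₂, h₃⟩
end

section
/- Let X ∈ ℝ^p, Y ∈ ℝ^q, Z ∈ ℝ^r be random vectors on a common probability space with finite first moments, and let (X,Y,Z), (X',Y',Z') be iid copies. Define the double-centered distance functions A_X(x,x') := |x−x'| − E|x−X'| − E|X−x'| + E|X−X'|, and similarly B_Y, C_Z. Assume A_X(X,X')², B_Y(Y,Y')², C_Z(Z,Z')² are integrable, and define V²(X,Y) := E[A_X(X,X') B_Y(Y,Y')] and analogously all other pairs, with V²(X,X) := E[A_X(X,X')²], etc. Define the population distance correlation R²(X,Y) := V²(X,Y)/√(V²(X,X)V²(Y,Y)) when V²(X,X)V²(Y,Y) > 0 and R²(X,Y) := 0 otherwise; similarly R²(X,Z), R²(Y,Z); write R⁴ := (R²)². Set α := V²(X,Z)/V²(Z,Z) and β := V²(Y,Z)/V²(Z,Z) if V²(Z,Z) > 0, and α = β =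 0 otherwise. Define the population partial distance correlation R*(X,Y;Z) := E[(A_X(X,X') − αC_Z(Z,Z'))(B_Y(Y,Y') − βC_Z(Z,Z'))] / (|P_{Z⊥}(X)| |P_{Z⊥}(Y)|), where |P_{Z⊥}(X)|² := E[(A_X(X,X') − αC_Z(Z,Z'))²] and |P_{Z⊥}(Y)|² := E[(B_Y(Y,Y') − βC_Z(Z,Z'))²], with R*(X,Y;Z) := 0 if |P_{Z⊥}(X)||P_{Z⊥}(Y)| = 0. Then R*(X,Y;Z) = (R²(X,Y) − R²(X,Z)R²(Y,Z)) / (√(1−R⁴(X,Z)) √(1−R⁴(Y,Z))) whenever R²(X,Z) ≠ 1 and R²(Y,Z) ≠ 1, and R*(X,Y;Z) = 0 whenever R²(X,Z) = 1 or R²(Y,Z) = 1. -/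
open MeasureTheory ProbabilityTheory

/-- The double-centered distance function
`A_X(x,x') = |x−x'| − E|x−X'| − E|X−x'| + E|X−X'|` with respect to the
distribution of a random vector `X` (the expectations taken over independent
copies, which have the same distribution as `X`). -/
noncomputable def dcf {Ω : Type*} [MeasurableSpace Ω] (μ : Measure Ω) {d : ℕ}
    (X : Ω → EuclideanSpace ℝ (Fin d)) (x x' : EuclideanSpace ℝ (Fin d)) : ℝ :=
  ‖x - x'‖ - (∫ ω, ‖x - X ω‖ ∂μ) - (∫ ω, ‖X ω - x'‖ ∂μ)
    + ∫ ω, ∫ ω', ‖X ω - X ω'‖ ∂μ ∂μ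

/-- `V²(X,Y) = E[A_X(X,X') B_Y(Y,Y')]`, where `(X',Y')` is an iid copy of `(X,Y)`. -/
noncomputable def Vsq {Ω : Type*} [MeasurableSpace Ω] (μ : Measure Ω) {d e : ℕ}
    (X X' : Ω → EuclideanSpace ℝ (Fin d))
    (Y Y' : Ω → EuclideanSpace ℝ (Fin e)) : ℝ :=
  ∫ ω, dcf μ X (X ω) (X' ω) * dcf μ Y (Y ω) (Y' ω) ∂μ

open Classical in
/-- The population (squared) distance correlation
`R²(X,Y) = V²(X,Y)/√(V²(X,X)V²(Y,Y))` when `V²(X,X)V²(Y,Y) > 0`, else `0`. -/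
noncomputable def RsqPop {Ω : Type*} [MeasurableSpace Ω] (μ : Measure Ω) {d e : ℕ}
    (X X' : Ω → EuclideanSpace ℝ (Fin d))
    (Y Y' : Ω → EuclideanSpace ℝ (Fin e)) : ℝ :=
  if 0 < Vsq μ X X' X X' * Vsq μ Y Y' Y Y' then
    Vsq μ X X' Y Y' / Real.sqrt (Vsq μ X X' X X' * Vsq μ Y Y' Y Y')
  else 0

open Classical in
/-- The population partial distance correlation `R*(X,Y;Z)`, defined through the
projections `A_X − αC_Z` and `B_Y − βC_Z`, with
`α = V²(X,Z)/V²(Z,Z)`, `β = V²(Y,Z)/V²(Z,Z)` (zero if `V²(Z,Z) = 0`). -/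
noncomputable def pdcorPop {Ω : Type*} [MeasurableSpace Ω] (μ : Measure Ω)
    {d e f : ℕ}
    (X X' : Ω → EuclideanSpace ℝ (Fin d))
    (Y Y' : Ω → EuclideanSpace ℝ (Fin e))
    (Z Z' : Ω → EuclideanSpace ℝ (Fin f)) : ℝ :=
  let α : ℝ := if 0 < Vsq μ Z Z' Z Z' then Vsq μ X X' Z Z' / Vsq μ Z Z' Z Z' else 0
  let β : ℝ := if 0 < Vsq μ Z Z' Z Z' then Vsq μ Y Y' Z Z' / Vsq μ Z Z' Z Z' else 0
  let nPx : ℝ := Real.sqrt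
    (∫ ω, (dcf μ X (X ω) (X' ω) - α * dcf μ Z (Z ω) (Z' ω)) ^ 2 ∂μ)
  let nPy : ℝ := Real.sqrt
    (∫ ω, (dcf μ Y (Y ω) (Y' ω) - β * dcf μ Z (Z ω) (Z' ω)) ^ 2 ∂μ)
  if nPx * nPy = 0 then 0
  else
    (∫ ω, (dcf μ X (X ω) (X' ω) - α * dcf μ Z (Z ω) (Z' ω)) *
          (dcf μ Y (Y ω) (Y' ω) - β * dcf μ Z (Z ω) (Z' ω)) ∂μ) / (nPx * nPy)

/-!
Write `A`, `B`, `C` for the double-centered distances `A_X(X,X')`, `B_Y(Y,Y')`, `C_Z(Z,Z')`.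
They lie in `L²(μ)`, where `V²` is the inner product, so `R²(X,Y)` is the cosine of the angle
between `A` and `B`, and `A − αC`, `B − βC` are the orthogonal projections of `A`, `B` onto
`C^⊥`. The formula is then the spherical law of cosines for the unit vectors in the directions
of `A`, `B`, `C`: it holds in every real inner product space, including the degenerate
configurations thanks to the convention `x / 0 = 0`.
-/

open InnerProductGeometry
open scoped RealInnerProductSpace

section InnerProductSpace

variable {E : Type*} [NormedAddCommGroup E] [InnerProductSpace ℝ E]

theorem starProjection_span_singleton_real (u w : E) :
    (ℝ ∙ w).starProjection u = (⟪u, w⟫ / ‖w‖ ^ 2) • w := by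
  rw [Submodule.starProjection_singleton, real_inner_comm]
  rfl

theorem inner_sub_starProjection_span_singleton (u v w : E) :
    ⟪u - (ℝ ∙ w).starProjection u, v - (ℝ ∙ w).starProjection v⟫ =
      ⟪u, v⟫ - ⟪u, w⟫ * ⟪v, w⟫ / ‖w‖ ^ 2 := by
  rcases eq_or_ne w 0 with rfl | hw
  · simp
  have hw2 : ‖w‖ ^ 2 ≠ 0 := by positivity
  simp only [starProjection_span_singleton_real, inner_sub_left, inner_sub_right,
    real_inner_smul_left, real_inner_smul_right, real_inner_self_eq_norm_sq, real_inner_comm w]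
  field_simp
  ring

theorem norm_sub_starProjection_span_singleton (u w : E) :
    ‖u - (ℝ ∙ w).starProjection u‖ = ‖u‖ * √(1 - Real.cos (angle u w) ^ 2) := by
  have hsq : ‖u‖ ^ 2 * (1 - Real.cos (angle u w) ^ 2) = ⟪u, u⟫ - ⟪u, w⟫ * ⟪u, w⟫ / ‖w‖ ^ 2 := by
    rcases eq_or_ne u 0 with rfl | hu
    · simp
    have hu' : ‖u‖ ≠ 0 := norm_ne_zero_iff.2 hu
    rw [cos_angle, real_inner_self_eq_norm_sq]
    field_simp
  rw [← Real.sqrt_sq (norm_nonneg (u - _)), ← real_inner_self_eq_norm_sq,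
    inner_sub_starProjection_span_singleton, ← hsq, Real.sqrt_mul (sq_nonneg _),
    Real.sqrt_sq (norm_nonneg _)]

theorem cos_angle_sub_starProjection_span_singleton (u v w : E) :
    Real.cos (angle (u - (ℝ ∙ w).starProjection u) (v - (ℝ ∙ w).starProjection v)) =
      (Real.cos (angle u v) - Real.cos (angle u w) * Real.cos (angle v w)) /
        (√(1 - Real.cos (angle u w) ^ 2) * √(1 - Real.cos (angle v w) ^ 2)) := by
  rw [cos_angle, inner_sub_starProjection_span_singleton, norm_sub_starProjection_span_singleton,
    norm_sub_starProjection_span_singleton, mul_mul_mul_comm, ← div_div (_ - _)]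
  congr 1
  simp only [cos_angle]
  ring

theorem ite_pos_div_sqrt_eq_cos_angle (u v : E) [Decidable (0 < ⟪u, u⟫ * ⟪v, v⟫)] :
    (if 0 < ⟪u, u⟫ * ⟪v, v⟫ then ⟪u, v⟫ / √(⟪u, u⟫ * ⟪v, v⟫) else 0) = Real.cos (angle u v) := by
  have hnorm : ⟪u, u⟫ * ⟪v, v⟫ = (‖u‖ * ‖v‖) ^ 2 := by
    rw [real_inner_self_eq_norm_sq, real_inner_self_eq_norm_sq, mul_pow]
  rw [cos_angle]
  split_ifs with h
  · rw [hnorm, Real.sqrt_sq (by positivity)]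
  · rw [hnorm] at h
    rw [show ‖u‖ * ‖v‖ = 0 by nlinarith [norm_nonneg u, norm_nonneg v], div_zero]

theorem ite_pos_div_smul_eq_starProjection (u w : E) [Decidable (0 < ⟪w, w⟫)] :
    (if 0 < ⟪w, w⟫ then ⟪u, w⟫ / ⟪w, w⟫ else 0) • w = (ℝ ∙ w).starProjection u := by
  rw [starProjection_span_singleton_real]
  split_ifs with h
  · rw [real_inner_self_eq_norm_sq]
  · rw [real_inner_self_eq_norm_sq] at h
    rw [show ‖w‖ ^ 2 = 0 by nlinarith [sq_nonneg ‖w‖], div_zero]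

end InnerProductSpace

section L2

variable {Ω : Type*} [MeasurableSpace Ω] {μ : Measure Ω}

theorem integral_mul_eq_inner_toLp {f g : Ω → ℝ} (hf : MemLp f 2 μ) (hg : MemLp g 2 μ) :
    ∫ ω, f ω * g ω ∂μ = ⟪hf.toLp f, hg.toLp g⟫ := by
  rw [L2.inner_def]
  refine integral_congr_ae ?_
  filter_upwards [hf.coeFn_toLp, hg.coeFn_toLp] with ω hfω hgω
  simp [hfω, hgω, mul_comm]

theorem integral_sub_mul_mul_sub_mul_eq_inner_toLp {f g h : Ω → ℝ} (hf : MemLp f 2 μ)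
    (hg : MemLp g 2 μ) (hh : MemLp h 2 μ) (a b : ℝ) :
    ∫ ω, (f ω - a * h ω) * (g ω - b * h ω) ∂μ =
      ⟪hf.toLp f - a • hh.toLp h, hg.toLp g - b • hh.toLp h⟫ :=
  integral_mul_eq_inner_toLp (hf.sub (hh.const_smul a)) (hg.sub (hh.const_smul b))

theorem sqrt_integral_sub_mul_sq_eq_norm_toLp {f h : Ω → ℝ} (hf : MemLp f 2 μ)
    (hh : MemLp h 2 μ) (a : ℝ) :
    √(∫ ω, (f ω - a * h ω) ^ 2 ∂μ) = ‖hf.toLp f - a • hh.toLp h‖ := by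
  simp_rw [sq, integral_sub_mul_mul_sub_mul_eq_inner_toLp hf hf hh a a,
    real_inner_self_eq_norm_mul_norm]
  exact Real.sqrt_mul_self (norm_nonneg _)

end L2

section DistanceCorrelation

variable {Ω : Type*} [MeasurableSpace Ω] {μ : Measure Ω} {d e f : ℕ}
  {X X' : Ω → EuclideanSpace ℝ (Fin d)} {Y Y' : Ω → EuclideanSpace ℝ (Fin e)}
  {Z Z' : Ω → EuclideanSpace ℝ (Fin f)}

theorem measurable_dcf [SFinite μ] (hX : Measurable X) :
    Measurable fun x : EuclideanSpace ℝ (Fin d) × EuclideanSpace ℝ (Fin d) =>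
      dcf μ X x.1 x.2 := by
  have hF : StronglyMeasurable fun x : EuclideanSpace ℝ (Fin d) => ∫ ω, ‖x - X ω‖ ∂μ :=
    StronglyMeasurable.integral_prod_right
      (measurable_fst.sub (hX.comp measurable_snd)).norm.stronglyMeasurable
  have hG : StronglyMeasurable fun x' : EuclideanSpace ℝ (Fin d) => ∫ ω, ‖X ω - x'‖ ∂μ :=
    StronglyMeasurable.integral_prod_right
      ((hX.comp measurable_snd).sub measurable_fst).norm.stronglyMeasurable
  exact (((measurable_fst.sub measurable_snd).norm.sub (hF.measurable.comp measurable_fst)).sub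
    (hG.measurable.comp measurable_snd)).add_const _

theorem memLp_two_dcf [SFinite μ] (hX : Measurable X) (hX' : Measurable X')
    (hsq : Integrable (fun ω => dcf μ X (X ω) (X' ω) ^ 2) μ) :
    MemLp (fun ω => dcf μ X (X ω) (X' ω)) 2 μ :=
  (memLp_two_iff_integrable_sq
    ((measurable_dcf hX).comp (hX.prodMk hX')).aestronglyMeasurable).2 hsq

theorem RsqPop_eq_cos_angle (hA : MemLp (fun ω => dcf μ X (X ω) (X' ω)) 2 μ)
    (hB : MemLp (fun ω => dcf μ Y (Y ω) (Y' ω)) 2 μ) :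
    RsqPop μ X X' Y Y' = Real.cos (angle (hA.toLp _) (hB.toLp _)) := by
  rw [RsqPop, Vsq, Vsq, Vsq, integral_mul_eq_inner_toLp hA hA, integral_mul_eq_inner_toLp hB hB,
    integral_mul_eq_inner_toLp hA hB, ite_pos_div_sqrt_eq_cos_angle]

theorem pdcorPop_eq_cos_angle (hA : MemLp (fun ω => dcf μ X (X ω) (X' ω)) 2 μ)
    (hB : MemLp (fun ω => dcf μ Y (Y ω) (Y' ω)) 2 μ)
    (hC : MemLp (fun ω => dcf μ Z (Z ω) (Z' ω)) 2 μ) :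
    pdcorPop μ X X' Y Y' Z Z' =
      Real.cos (angle (hA.toLp _ - (ℝ ∙ hC.toLp _).starProjection (hA.toLp _))
        (hB.toLp _ - (ℝ ∙ hC.toLp _).starProjection (hB.toLp _))) := by
  simp only [pdcorPop, Vsq, sqrt_integral_sub_mul_sq_eq_norm_toLp hA hC,
    sqrt_integral_sub_mul_sq_eq_norm_toLp hB hC,
    integral_sub_mul_mul_sub_mul_eq_inner_toLp hA hB hC, integral_mul_eq_inner_toLp hA hC,
    integral_mul_eq_inner_toLp hB hC, integral_mul_eq_inner_toLp hC hC,
    ite_pos_div_smul_eq_starProjection, cos_angle]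
  split_ifs with h
  · rw [h, div_zero]
  · rfl

end DistanceCorrelation

theorem pdcorPop_formula_general
    {Ω : Type*} [MeasurableSpace Ω] (μ : Measure Ω) [IsProbabilityMeasure μ]
    {d e f : ℕ}
    (X X' : Ω → EuclideanSpace ℝ (Fin d))
    (Y Y' : Ω → EuclideanSpace ℝ (Fin e))
    (Z Z' : Ω → EuclideanSpace ℝ (Fin f))
    (hXm : Measurable X) (hYm : Measurable Y) (hZm : Measurable Z)
    (hX'm : Measurable X') (hY'm : Measurable Y') (hZ'm : Measurable Z')
    (hAX2 : Integrable (fun ω => (dcf μ X (X ω) (X' ω)) ^ 2) μ)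
    (hBY2 : Integrable (fun ω => (dcf μ Y (Y ω) (Y' ω)) ^ 2) μ)
    (hCZ2 : Integrable (fun ω => (dcf μ Z (Z ω) (Z' ω)) ^ 2) μ) :
    (RsqPop μ X X' Z Z' ≠ 1 → RsqPop μ Y Y' Z Z' ≠ 1 →
      pdcorPop μ X X' Y Y' Z Z' =
        (RsqPop μ X X' Y Y' - RsqPop μ X X' Z Z' * RsqPop μ Y Y' Z Z') /
        (Real.sqrt (1 - (RsqPop μ X X' Z Z') ^ 2) *
         Real.sqrt (1 - (RsqPop μ Y Y' Z Z') ^ 2))) ∧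
    (RsqPop μ X X' Z Z' = 1 ∨ RsqPop μ Y Y' Z Z' = 1 →
      pdcorPop μ X X' Y Y' Z Z' = 0) := by
  have hA := memLp_two_dcf hXm hX'm hAX2
  have hB := memLp_two_dcf hYm hY'm hBY2
  have hC := memLp_two_dcf hZm hZ'm hCZ2
  have hformula : pdcorPop μ X X' Y Y' Z Z' =
      (RsqPop μ X X' Y Y' - RsqPop μ X X' Z Z' * RsqPop μ Y Y' Z Z') /
        (√(1 - RsqPop μ X X' Z Z' ^ 2) * √(1 - RsqPop μ Y Y' Z Z' ^ 2)) := by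
    rw [pdcorPop_eq_cos_angle hA hB hC, RsqPop_eq_cos_angle hA hB, RsqPop_eq_cos_angle hA hC,
      RsqPop_eq_cos_angle hB hC]
    exact cos_angle_sub_starProjection_span_singleton _ _ _
  refine ⟨fun _ _ => hformula, ?_⟩
  rintro (h | h) <;> simp [hformula, h]

/-- Population partial distance correlation in terms of pairwise distance
correlations:
`R*(X,Y;Z) = (R²(X,Y) − R²(X,Z)R²(Y,Z)) / (√(1−R⁴(X,Z)) √(1−R⁴(Y,Z)))`
when `R²(X,Z) ≠ 1` and `R²(Y,Z) ≠ 1`, and `R*(X,Y;Z) = 0` otherwise. -/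
theorem pdcorPop_formula
    {Ω : Type*} [MeasurableSpace Ω] (μ : Measure Ω) [IsProbabilityMeasure μ]
    {d e f : ℕ}
    (X X' : Ω → EuclideanSpace ℝ (Fin d))
    (Y Y' : Ω → EuclideanSpace ℝ (Fin e))
    (Z Z' : Ω → EuclideanSpace ℝ (Fin f))
    (hXm : Measurable X) (hYm : Measurable Y) (hZm : Measurable Z)
    (hX'm : Measurable X') (hY'm : Measurable Y') (hZ'm : Measurable Z')
    (hX1 : Integrable (fun ω => ‖X ω‖) μ)
    (hY1 : Integrable (fun ω => ‖Y ω‖) μ)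
    (hZ1 : Integrable (fun ω => ‖Z ω‖) μ)
    (hid : IdentDistrib (fun ω => (X ω, Y ω, Z ω)) (fun ω => (X' ω, Y' ω, Z' ω)) μ μ)
    (hindep : IndepFun (fun ω => (X ω, Y ω, Z ω)) (fun ω => (X' ω, Y' ω, Z' ω)) μ)
    (hAX2 : Integrable (fun ω => (dcf μ X (X ω) (X' ω)) ^ 2) μ)
    (hBY2 : Integrable (fun ω => (dcf μ Y (Y ω) (Y' ω)) ^ 2) μ)
    (hCZ2 : Integrable (fun ω => (dcf μ Z (Z ω) (Z' ω)) ^ 2) μ) :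
    (RsqPop μ X X' Z Z' ≠ 1 → RsqPop μ Y Y' Z Z' ≠ 1 →
      pdcorPop μ X X' Y Y' Z Z' =
        (RsqPop μ X X' Y Y' - RsqPop μ X X' Z Z' * RsqPop μ Y Y' Z Z') /
        (Real.sqrt (1 - (RsqPop μ X X' Z Z') ^ 2) *
         Real.sqrt (1 - (RsqPop μ Y Y' Z Z') ^ 2))) ∧
    (RsqPop μ X X' Z Z' = 1 ∨ RsqPop μ Y Y' Z Z' = 1 →
      pdcorPop μ X X' Y Y' Z Z' = 0) :=
  pdcorPop_formula_general μ X X' Y Y' Z Z' hXm hYm hZm hX'm hY'm hZ'm hAX2 hBY2 hCZ2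
end
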